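/- Every vanishing decomposition of a regular topological space X is upper semicontinuous. -/

import Mathlib

/-!
Let `x` lie outside the saturation of a closed set `F`, and let `A₀ ∈ D` be the member through
`x`; it misses `F`. Separate the compact set `A₀` from `F` by disjoint open sets `W ⊇ A₀` and
`V ⊇ F`. A member of `D` that meets both `F` and `W` lies in neither `Fᶜ` nor `V`, so by
vanishing, applied to the open cover `{Fᶜ, V}`, only finitely many of them come near `x`. None of
these contains `x`, and their union is closed, so removing it from a small neighbourhood of `x`
inside `W` leaves a neighbourhood of `x` that misses the saturation.
-/

open Set Filter Topology

section

variable {X : Type*} [TopologicalSpace X]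

def IsVanishing (D : Set (Set X)) : Prop :=
  ∀ U : Set (Set X), (∀ u ∈ U, IsOpen u) → ⋃₀ U = univ →
    ∀ x : X, ∃ N ∈ 𝓝 x, {A ∈ D | (∀ u ∈ U, ¬ A ⊆ u) ∧ (A ∩ N).Nonempty}.Finite

lemma IsVanishing.exists_nhds_finite_of_isClosed_subset_isOpen {D : Set (Set X)}
    (hD : IsVanishing D) {F V : Set X} (hF : IsClosed F) (hV : IsOpen V) (hFV : F ⊆ V) (x : X) :
    ∃ N ∈ 𝓝 x, {A ∈ D | (A ∩ F).Nonempty ∧ ¬ A ⊆ V ∧ (A ∩ N).Nonempty}.Finite := by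
  have hopen : ∀ u ∈ ({Fᶜ, V} : Set (Set X)), IsOpen u := by
    rintro u (rfl | rfl)
    exacts [hF.isOpen_compl, hV]
  have hcover : ⋃₀ ({Fᶜ, V} : Set (Set X)) = univ := by
    rw [sUnion_pair, eq_univ_iff_forall]
    intro y
    by_cases hy : y ∈ F
    exacts [Or.inr (hFV hy), Or.inl hy]
  obtain ⟨N, hN, hfin⟩ := hD {Fᶜ, V} hopen hcover x
  refine ⟨N, hN, hfin.subset ?_⟩
  rintro A ⟨hAD, hAF, hAV, hAN⟩
  refine ⟨hAD, ?_, hAN⟩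
  rintro u (rfl | rfl)
  exacts [fun h => not_disjoint_iff_nonempty_inter.mpr hAF (subset_compl_iff_disjoint_right.mp h),
    hAV]

lemma IsVanishing.isClosed_sUnion_inter_nonempty [T3Space X] {D : Set (Set X)}
    (hD : IsVanishing D) (hcov : ⋃₀ D = univ) (hdisj : D.Pairwise Disjoint)
    (hcpt : ∀ A ∈ D, IsCompact A) {F : Set X} (hF : IsClosed F) :
    IsClosed (⋃₀ {A ∈ D | (A ∩ F).Nonempty}) := by
  rw [← isOpen_compl_iff, isOpen_iff_mem_nhds]
  intro x hx
  obtain ⟨A₀, hA₀D, hxA₀⟩ : x ∈ ⋃₀ D := hcov ▸ mem_univ x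
  have hA₀F : Disjoint A₀ F :=
    not_not.mp fun h => hx ⟨A₀, ⟨hA₀D, not_disjoint_iff_nonempty_inter.mp h⟩, hxA₀⟩
  obtain ⟨W, V, hW, hV, hA₀W, hFV, hWV⟩ :=
    SeparatedNhds.of_isCompact_isClosed (hcpt A₀ hA₀D) hF hA₀F
  obtain ⟨N, hN, hfin⟩ := hD.exists_nhds_finite_of_isClosed_subset_isOpen hF hV hFV x
  set T := {A ∈ D | (A ∩ F).Nonempty ∧ ¬ A ⊆ V ∧ (A ∩ N).Nonempty}
  have hxT : x ∉ ⋃₀ T := by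
    rintro ⟨A, ⟨hAD, hAF, -⟩, hxA⟩
    have hAA₀ : A ≠ A₀ := by
      rintro rfl
      exact not_disjoint_iff_nonempty_inter.mpr hAF hA₀F
    exact disjoint_left.mp (hdisj hAD hA₀D hAA₀) hxA hxA₀
  have hTclosed : IsClosed (⋃₀ T) := by
    rw [sUnion_eq_biUnion]
    exact hfin.isClosed_biUnion fun A hA => (hcpt A hA.1).isClosed
  filter_upwards [hN, hW.mem_nhds (hA₀W hxA₀), hTclosed.isOpen_compl.mem_nhds hxT]
    with y hyN hyW hyT
  rintro ⟨A, ⟨hAD, hAF⟩, hyA⟩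
  have hAV : ¬ A ⊆ V := fun h => disjoint_left.mp hWV hyW (h hyA)
  exact hyT ⟨A, ⟨hAD, hAF, hAV, y, hyA, hyN⟩, hyA⟩

end

theorem stmt7_general {X : Type*} [TopologicalSpace X] [T3Space X] (D : Set (Set X))
    (hcov : ⋃₀ D = Set.univ) (hdisj : D.Pairwise Disjoint)
    (hcpt : ∀ A ∈ D, IsCompact A)
    (hvan : ∀ U : Set (Set X), (∀ u ∈ U, IsOpen u) → ⋃₀ U = Set.univ →
      ∀ x : X, ∃ V ∈ nhds x,
        {A ∈ D | (∀ u ∈ U, ¬ A ⊆ u) ∧ (A ∩ V).Nonempty}.Finite) :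
    ∀ F : Set X, IsClosed F → IsClosed (⋃₀ {A ∈ D | (A ∩ F).Nonempty}) :=
  fun _ hF => IsVanishing.isClosed_sUnion_inter_nonempty hvan hcov hdisj hcpt hF

/-- Every vanishing decomposition of a regular (T₃) topological space is upper
semicontinuous. -/
theorem stmt7 {X : Type*} [TopologicalSpace X] [T3Space X] (D : Set (Set X))
    (hcov : ⋃₀ D = Set.univ) (hdisj : D.Pairwise Disjoint)
    (hne : ∀ A ∈ D, A.Nonempty) (hcpt : ∀ A ∈ D, IsCompact A)
    (hvan : ∀ U : Set (Set X), (∀ u ∈ U, IsOpen u) → ⋃₀ U = Set.univ →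
      ∀ x : X, ∃ V ∈ nhds x,
        {A ∈ D | (∀ u ∈ U, ¬ A ⊆ u) ∧ (A ∩ V).Nonempty}.Finite) :
    ∀ F : Set X, IsClosed F → IsClosed (⋃₀ {A ∈ D | (A ∩ F).Nonempty}) :=
  stmt7_general D hcov hdisj hcpt hvan
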